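/- For the surface of revolution r(u,v) = (u sinh v, u cosh v, f(u)), u > 0, in the semi-isotropic space, the semi-relative curvature equals K = f'(u)f''(u)/u and the semi-isotropic mean curvature equals H = (1/2)(f'(u)/u + f''(u)). -/

import Mathlib

/-- The (degenerate) semi-isotropic scalar product on `ℝ³ = ℝ × ℝ × ℝ`:
`⟨a, b⟩ = a₁b₁ − a₂b₂`. -/
noncomputable def sip (a b : ℝ × ℝ × ℝ) : ℝ := a.1 * b.1 - a.2.1 * b.2.1

/-- A triple viewed as a `Fin 3 → ℝ` vector. -/
noncomputable def vec3 (a : ℝ × ℝ × ℝ) : Fin 3 → ℝ := ![a.1, a.2.1, a.2.2]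

/-- Determinant of the 3×3 matrix with the given rows. -/
noncomputable def det3 (x y z : ℝ × ℝ × ℝ) : ℝ :=
  Matrix.det (Matrix.of ![vec3 x, vec3 y, vec3 z])

/-- The surface of revolution `r(u,v) = (u sinh v, u cosh v, f(u))`. -/
noncomputable def rmap (f : ℝ → ℝ) (u v : ℝ) : ℝ × ℝ × ℝ :=
  (u * Real.sinh v, u * Real.cosh v, f u)

noncomputable def r_u (f : ℝ → ℝ) (u v : ℝ) : ℝ × ℝ × ℝ :=
  deriv (fun t => rmap f t v) u

noncomputable def r_v (f : ℝ → ℝ) (u v : ℝ) : ℝ × ℝ × ℝ :=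
  deriv (fun t => rmap f u t) v

noncomputable def r_uu (f : ℝ → ℝ) (u v : ℝ) : ℝ × ℝ × ℝ :=
  deriv (fun t => r_u f t v) u

noncomputable def r_uv (f : ℝ → ℝ) (u v : ℝ) : ℝ × ℝ × ℝ :=
  deriv (fun t => r_u f u t) v

noncomputable def r_vv (f : ℝ → ℝ) (u v : ℝ) : ℝ × ℝ × ℝ :=
  deriv (fun t => r_v f u t) v

/-- First fundamental form components and `W = EG - F²`. -/
noncomputable def Ec (f : ℝ → ℝ) (u v : ℝ) : ℝ := sip (r_u f u v) (r_u f u v)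
noncomputable def Fc (f : ℝ → ℝ) (u v : ℝ) : ℝ := sip (r_u f u v) (r_v f u v)
noncomputable def Gc (f : ℝ → ℝ) (u v : ℝ) : ℝ := sip (r_v f u v) (r_v f u v)
noncomputable def Wc (f : ℝ → ℝ) (u v : ℝ) : ℝ :=
  Ec f u v * Gc f u v - (Fc f u v) ^ 2

/-- Second fundamental form components. -/
noncomputable def Lc (f : ℝ → ℝ) (u v : ℝ) : ℝ :=
  det3 (r_uu f u v) (r_u f u v) (r_v f u v) / Real.sqrt |Wc f u v|
noncomputable def Mc (f : ℝ → ℝ) (u v : ℝ) : ℝ :=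
  det3 (r_uv f u v) (r_u f u v) (r_v f u v) / Real.sqrt |Wc f u v|
noncomputable def Nc (f : ℝ → ℝ) (u v : ℝ) : ℝ :=
  det3 (r_vv f u v) (r_u f u v) (r_v f u v) / Real.sqrt |Wc f u v|

/-- For the surface of revolution `r(u,v) = (u sinh v, u cosh v, f(u))`, `u > 0`, in the
semi-isotropic space, the semi-relative curvature `K = −ε(LN − M²)/W` equals
`f'(u)f''(u)/u` and the semi-isotropic mean curvature `H = −ε(EN − 2FM + GL)/(2W)`
equals `(1/2)(f'(u)/u + f''(u))`, where `ε = sgn W`. -/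
lemma hr_u (f : ℝ → ℝ) (hf : ContDiff ℝ (⊤ : ℕ∞) f) (u v : ℝ) :
    r_u f u v = (Real.sinh v, Real.cosh v, deriv f u) := by
  have h : HasDerivAt (fun t => rmap f t v) (Real.sinh v, Real.cosh v, deriv f u) u := by
    exact ((hasDerivAt_id u).mul_const _).prodMk
      (((hasDerivAt_id u).mul_const _).prodMk
        ((hf.differentiable (by simp) u).hasDerivAt)) |>.congr_deriv (by simp)
  exact h.deriv

lemma hr_v (f : ℝ → ℝ) (u v : ℝ) :
    r_v f u v = (u * Real.cosh v, u * Real.sinh v, 0) := by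
  have h : HasDerivAt (fun t => rmap f u t) (u * Real.cosh v, u * Real.sinh v, 0) v :=
    ((Real.hasDerivAt_sinh v).const_mul u).prodMk
      (((Real.hasDerivAt_cosh v).const_mul u).prodMk (hasDerivAt_const v (f u)))
  exact h.deriv

lemma hr_uu (f : ℝ → ℝ) (hf : ContDiff ℝ (⊤ : ℕ∞) f) (u v : ℝ) :
    r_uu f u v = (0, 0, deriv (deriv f) u) := by
  have heq : (fun t => r_u f t v) = fun t => (Real.sinh v, Real.cosh v, deriv f t) :=
    funext fun t => hr_u f hf t v
  have hdf : Differentiable ℝ (deriv f) :=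
    (contDiff_infty_iff_deriv.mp (hf.of_le le_rfl)).2.differentiable (by simp)
  have h : HasDerivAt (fun t => (Real.sinh v, Real.cosh v, deriv f t))
      (0, 0, deriv (deriv f) u) u :=
    (hasDerivAt_const u _).prodMk ((hasDerivAt_const u _).prodMk (hdf u).hasDerivAt)
  rw [r_uu, heq]; exact h.deriv

lemma hr_uv (f : ℝ → ℝ) (hf : ContDiff ℝ (⊤ : ℕ∞) f) (u v : ℝ) :
    r_uv f u v = (Real.cosh v, Real.sinh v, 0) := by
  have heq : (fun t => r_u f u t) = fun t => (Real.sinh t, Real.cosh t, deriv f u) :=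
    funext fun t => hr_u f hf u t
  have h : HasDerivAt (fun t => (Real.sinh t, Real.cosh t, deriv f u))
      (Real.cosh v, Real.sinh v, 0) v :=
    (Real.hasDerivAt_sinh v).prodMk ((Real.hasDerivAt_cosh v).prodMk (hasDerivAt_const v _))
  rw [r_uv, heq]; exact h.deriv

lemma hr_vv (f : ℝ → ℝ) (u v : ℝ) :
    r_vv f u v = (u * Real.sinh v, u * Real.cosh v, 0) := by
  have heq : (fun t => r_v f u t) = fun t => (u * Real.cosh t, u * Real.sinh t, 0) :=
    funext fun t => hr_v f u t
  have h : HasDerivAt (fun t => (u * Real.cosh t, u * Real.sinh t, (0:ℝ)))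
      (u * Real.sinh v, u * Real.cosh v, 0) v :=
    ((Real.hasDerivAt_cosh v).const_mul u).prodMk
      (((Real.hasDerivAt_sinh v).const_mul u).prodMk (hasDerivAt_const v _))
  rw [r_vv, heq]; exact h.deriv

theorem surface_of_revolution_curvatures
    (f : ℝ → ℝ) (hf : ContDiff ℝ (⊤ : ℕ∞) f) (u v : ℝ) (hu : 0 < u) :
    -(Real.sign (Wc f u v)) * (Lc f u v * Nc f u v - (Mc f u v) ^ 2) / Wc f u v
      = deriv f u * deriv (deriv f) u / u ∧
    -(Real.sign (Wc f u v)) *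
        (Ec f u v * Nc f u v - 2 * Fc f u v * Mc f u v + Gc f u v * Lc f u v) /
        (2 * Wc f u v)
      = (1 / 2) * (deriv f u / u + deriv (deriv f) u) := by
  have hsc : Real.cosh v ^ 2 - Real.sinh v ^ 2 = 1 := Real.cosh_sq_sub_sinh_sq v
  have hE : Ec f u v = -1 := by
    simp only [Ec, sip, hr_u f hf]; nlinarith
  have hF : Fc f u v = 0 := by
    simp only [Fc, sip, hr_u f hf, hr_v f]; ring
  have hG : Gc f u v = u ^ 2 := by
    simp only [Gc, sip, hr_v f]; nlinarith
  have hW : Wc f u v = -u ^ 2 := by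
    simp [Wc, hE, hF, hG]
  have hsqrt : Real.sqrt |Wc f u v| = u := by
    rw [hW]; rw [abs_neg, abs_of_nonneg (by positivity)]
    exact Real.sqrt_sq hu.le
  have hL : Lc f u v = -deriv (deriv f) u := by
    simp only [Lc, hsqrt, det3, hr_uu f hf, hr_u f hf, hr_v f, vec3, Matrix.det_fin_three]
    simp only [Matrix.of_apply, Matrix.cons_val', Matrix.cons_val_zero, Matrix.cons_val_one,
      Matrix.head_cons, Matrix.empty_val', Matrix.cons_val_fin_one, Matrix.head_fin_const,
      Matrix.cons_val_two, Matrix.tail_cons]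
    field_simp
    linear_combination (-(deriv (deriv f) u * u)) * hsc
  have hM : Mc f u v = 0 := by
    simp only [Mc, hsqrt, det3, hr_uv f hf, hr_u f hf, hr_v f, vec3, Matrix.det_fin_three]
    simp only [Matrix.of_apply, Matrix.cons_val', Matrix.cons_val_zero, Matrix.cons_val_one,
      Matrix.head_cons, Matrix.empty_val', Matrix.cons_val_fin_one, Matrix.head_fin_const,
      Matrix.cons_val_two, Matrix.tail_cons]
    field_simp
    ring
  have hN : Nc f u v = u * deriv f u := by
    simp only [Nc, hsqrt, det3, hr_vv f, hr_u f hf, hr_v f, vec3, Matrix.det_fin_three]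
    simp only [Matrix.of_apply, Matrix.cons_val', Matrix.cons_val_zero, Matrix.cons_val_one,
      Matrix.head_cons, Matrix.empty_val', Matrix.cons_val_fin_one, Matrix.head_fin_const,
      Matrix.cons_val_two, Matrix.tail_cons]
    field_simp
    linear_combination (u * deriv f u) * hsc
  have hsign : Real.sign (Wc f u v) = -1 := by
    rw [hW]; exact Real.sign_of_neg (by nlinarith)
  constructor
  · rw [hsign, hL, hM, hN, hW]
    field_simp
    ring
  · rw [hsign, hE, hF, hG, hL, hM, hN, hW]
    field_simp
    ring
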